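/- Let (X_i)_{1≤i≤n} be square-integrable random variables adapted to a nondecreasing filtration (F_i), S_j = ∑_{k=1}^j X_k and M_n = max_{1≤i≤n} |S_i|. Then E(M_n^2) ≤ 4 ∑_{k=1}^n E(X_k^2) + 12 ∑_{k=1}^{n-1} E|X_k · E(S_n - S_k | F_k)|. -/

import Mathlib

open MeasureTheory Finset

private lemma sign_mul_self' (x : ℝ) : Real.sign x * x = |x| := by
  rcases lt_trichotomy x 0 with h | h | h
  · rw [Real.sign_of_neg h, abs_of_neg h]; ring
  · simp [h]
  · rw [Real.sign_of_pos h, abs_of_pos h]; ring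

private lemma abs_sign_mul' (x d : ℝ) (hd : 0 ≤ d) : |Real.sign x * d| ≤ d := by
  have h1 : |Real.sign x| ≤ 1 := by
    rcases Real.sign_apply_eq x with h | h | h <;> rw [h] <;> norm_num
  calc |Real.sign x * d| = |Real.sign x| * |d| := abs_mul _ _
    _ ≤ 1 * |d| := mul_le_mul_of_nonneg_right h1 (abs_nonneg d)
    _ = d := by rw [one_mul, abs_of_nonneg hd]

private lemma measurable_real_sign : Measurable Real.sign := by
  have h : Real.sign = fun r : ℝ => if r < 0 then (-1 : ℝ) else if 0 < r then 1 else 0 := by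
    funext r; rfl
  rw [h]
  exact Measurable.ite (measurableSet_lt measurable_id measurable_const) measurable_const
    (Measurable.ite (measurableSet_lt measurable_const measurable_id) measurable_const
      measurable_const)

noncomputable def maxS {Ω : Type*} (S : ℕ → Ω → ℝ) : ℕ → Ω → ℝ
  | 0 => fun _ => 0
  | k + 1 => fun ω => max (maxS S k ω) |S (k + 1) ω|

noncomputable def cS {Ω : Type*} (S : ℕ → Ω → ℝ) (k : ℕ) (ω : Ω) : ℝ :=
  Real.sign (S k ω) * (maxS S k ω - maxS S (k - 1) ω)

section ptwise

variable {Ω : Type*} (S : ℕ → Ω → ℝ) (ω : Ω)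

lemma maxS_nonneg : ∀ k, 0 ≤ maxS S k ω
  | 0 => le_refl 0
  | k + 1 => le_trans (maxS_nonneg k) (le_max_left _ _)

lemma maxS_le_succ (k : ℕ) : maxS S k ω ≤ maxS S (k + 1) ω := le_max_left _ _

lemma abs_le_maxS (hS0 : S 0 ω = 0) : ∀ k, |S k ω| ≤ maxS S k ω
  | 0 => by simp [maxS, hS0]
  | k + 1 => le_max_right _ _

lemma maxS_sq_step (k : ℕ) :
    maxS S (k + 1) ω ^ 2 - maxS S k ω ^ 2 ≤ 2 * (cS S (k + 1) ω * S (k + 1) ω) := by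
  have hb : 0 ≤ maxS S k ω := maxS_nonneg S ω k
  rcases le_or_gt |S (k + 1) ω| (maxS S k ω) with h | h
  · have hmax : maxS S (k + 1) ω = maxS S k ω := max_eq_left h
    have hc : cS S (k + 1) ω = 0 := by
      simp [cS, Nat.add_sub_cancel, hmax]
    rw [hmax, hc]; simp
  · have hmax : maxS S (k + 1) ω = |S (k + 1) ω| := max_eq_right h.le
    have hc : cS S (k + 1) ω * S (k + 1) ω
        = |S (k + 1) ω| * (|S (k + 1) ω| - maxS S k ω) := by
      simp only [cS, Nat.add_sub_cancel, hmax]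
      rw [mul_comm (Real.sign _) _, mul_assoc, sign_mul_self']; ring
    rw [hmax, hc]
    nlinarith [abs_nonneg (S (k + 1) ω)]

lemma maxS_sq_le : ∀ n, maxS S n ω ^ 2 ≤ 2 * ∑ k ∈ Icc 1 n, cS S k ω * S k ω := by
  intro n
  induction n with
  | zero => simp [maxS]
  | succ m ih =>
      rw [Finset.sum_Icc_succ_top (Nat.le_add_left 1 m)]
      have h := maxS_sq_step S ω m
      linarith

lemma abs_cS_le_sub (k : ℕ) : |cS S (k + 1) ω| ≤ maxS S (k + 1) ω - maxS S k ω := by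
  have hd : 0 ≤ maxS S (k + 1) ω - maxS S k ω := sub_nonneg.2 (maxS_le_succ S ω k)
  have h := abs_sign_mul' (S (k + 1) ω) (maxS S (k + 1) ω - maxS S k ω) hd
  simpa [cS, Nat.add_sub_cancel] using h

lemma abs_sum_cS_le : ∀ n, |∑ k ∈ Icc 1 n, cS S k ω| ≤ maxS S n ω := by
  intro n
  induction n with
  | zero => simp [maxS]
  | succ m ih =>
      rw [Finset.sum_Icc_succ_top (Nat.le_add_left 1 m)]
      have h1 := abs_cS_le_sub S ω m
      calc |(∑ k ∈ Icc 1 m, cS S k ω) + cS S (m + 1) ω|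
          ≤ |∑ k ∈ Icc 1 m, cS S k ω| + |cS S (m + 1) ω| := abs_add_le _ _
        _ ≤ maxS S m ω + (maxS S (m + 1) ω - maxS S m ω) := add_le_add ih h1
        _ = maxS S (m + 1) ω := by ring

lemma cS_abs_le (hS0 : S 0 ω = 0) (k : ℕ) :
    |cS S (k + 1) ω| ≤ |S (k + 1) ω - S k ω| := by
  have h1 := abs_cS_le_sub S ω k
  have hSk : |S k ω| ≤ maxS S k ω := abs_le_maxS S ω hS0 k
  have h3 : |S (k + 1) ω| ≤ |S k ω| + |S (k + 1) ω - S k ω| := by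
    have := abs_sub_abs_le_abs_sub (S (k + 1) ω) (S k ω); linarith
  have h2 : maxS S (k + 1) ω ≤ maxS S k ω + |S (k + 1) ω - S k ω| := by
    refine max_le (le_add_of_nonneg_right (abs_nonneg _)) (by linarith)
  linarith

lemma maxS_eq_sup' : ∀ n, 1 ≤ n → ∀ h : (Icc 1 n).Nonempty,
    maxS S n ω = (Icc 1 n).sup' h fun i => |S i ω| := by
  intro n
  induction n with
  | zero => omega
  | succ m ih =>
      intro _ h
      rcases Nat.eq_zero_or_pos m with rfl | hm
      · show max (maxS S 0 ω) |S 1 ω| = _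
        have : (Icc 1 1 : Finset ℕ) = {1} := rfl
        simp only [maxS]
        rw [Finset.sup'_congr h this (fun i _ => rfl)]
        rw [Finset.sup'_singleton]
        exact max_eq_right (abs_nonneg _)
      · have hins : Icc 1 (m + 1) = insert (m + 1) (Icc 1 m) := by
          ext x; simp [Nat.lt_succ_iff]; omega
        have hne : (Icc 1 m).Nonempty := ⟨1, by simp; omega⟩
        rw [Finset.sup'_congr h hins (fun i _ => rfl)]
        rw [Finset.sup'_insert hne]
        show max (maxS S m ω) |S (m + 1) ω| = _
        rw [ih hm hne, max_comm]

end ptwise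

lemma telescope_Icc (f : ℕ → ℝ) : ∀ n, ∑ k ∈ Icc 1 n, (f k - f (k - 1)) = f n - f 0 := by
  intro n
  induction n with
  | zero => simp
  | succ m ih =>
      rw [Finset.sum_Icc_succ_top (Nat.le_add_left 1 m), ih]
      simp [Nat.add_sub_cancel]

private lemma integrable_mul2 {Ω : Type*} {mΩ : MeasurableSpace Ω} {μ : Measure Ω}
    {f g : Ω → ℝ} (hf : MemLp f 2 μ) (hg : MemLp g 2 μ) :
    Integrable (fun ω => f ω * g ω) μ := by
  have hint : Integrable (fun ω => (f ω ^ 2 + g ω ^ 2) / 2) μ :=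
    (hf.integrable_sq.add hg.integrable_sq).div_const 2
  refine Integrable.mono' hint (hf.aestronglyMeasurable.mul hg.aestronglyMeasurable) ?_
  filter_upwards with ω
  rw [Real.norm_eq_abs, abs_mul]
  nlinarith [sq_nonneg (|f ω| - |g ω|), abs_nonneg (f ω), abs_nonneg (g ω),
    sq_abs (f ω), sq_abs (g ω)]
/-- Maximal inequality (Corollary 6): for square-integrable random variables adapted to a
nondecreasing filtration, `E(M_n²) ≤ 4 ∑ E(X_k²) + 12 ∑_{k=1}^{n-1} E|X_k E(S_n - S_k|F_k)|`. -/
theorem stmt2 {Ω : Type*} {mΩ : MeasurableSpace Ω} (μ : Measure Ω) [IsProbabilityMeasure μ]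
    (F : ℕ → MeasurableSpace Ω) (hFmono : Monotone F) (hFle : ∀ i, F i ≤ mΩ)
    (X : ℕ → Ω → ℝ) (hadapt : ∀ k, StronglyMeasurable[F k] (X k))
    (hX2 : ∀ k, MemLp (X k) 2 μ)
    (n : ℕ) (hn : 1 ≤ n)
    (S : ℕ → Ω → ℝ) (hS : ∀ j ω, S j ω = ∑ k ∈ Finset.Icc 1 j, X k ω)
    (M : Ω → ℝ)
    (hM : ∀ ω, M ω = (Finset.Icc 1 n).sup' ⟨1, by simp [hn]⟩ (fun i => |S i ω|)) :
    ∫ ω, (M ω) ^ 2 ∂μ ≤ 4 * ∑ k ∈ Finset.Icc 1 n, ∫ ω, (X k ω) ^ 2 ∂μ +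
      12 * ∑ k ∈ Finset.Icc 1 (n - 1),
        ∫ ω, |X k ω * (μ[fun ω' => S n ω' - S k ω' | F k]) ω| ∂μ := by
  -- basic facts about S
  have hS0 : ∀ ω, S 0 ω = 0 := fun ω => by simp [hS]
  have hdiff : ∀ k ω, S (k + 1) ω - S k ω = X (k + 1) ω := by
    intro k ω
    rw [hS, hS, Finset.sum_Icc_succ_top (Nat.le_add_left 1 k)]
    ring
  have hSsm : ∀ j, StronglyMeasurable[F j] (S j) := by
    intro j
    have hj : S j = fun ω => ∑ k ∈ Finset.Icc 1 j, X k ω := funext fun ω => hS j ω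
    rw [hj]
    exact Finset.stronglyMeasurable_fun_sum _ fun i hi =>
      (hadapt i).mono (hFmono (Finset.mem_Icc.mp hi).2)
  have hSm : ∀ j, Measurable[F j] (S j) := fun j => (hSsm j).measurable
  have hS2 : ∀ j, MemLp (S j) 2 μ := by
    intro j
    have hj : S j = fun ω => ∑ k ∈ Finset.Icc 1 j, X k ω := funext fun ω => hS j ω
    rw [hj]
    exact memLp_finset_sum _ fun i _ => hX2 i
  -- measurability and integrability of maxS and cS
  have hMm : ∀ k, Measurable[F k] (maxS S k) := by
    intro k
    induction k with
    | zero => exact measurable_const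
    | succ m ih =>
        have h1 : Measurable[F (m + 1)] (maxS S m) := ih.mono (hFmono (Nat.le_succ m)) le_rfl
        have h2 : Measurable[F (m + 1)] fun ω => |S (m + 1) ω| := continuous_abs.measurable.comp (hSm (m + 1))
        exact h1.max h2
  have hM2 : ∀ k, MemLp (maxS S k) 2 μ := by
    intro k
    induction k with
    | zero => exact memLp_const 0
    | succ m ih => exact ih.sup ((hS2 (m + 1)).abs)
  have hcm : ∀ m, Measurable[F (m + 1)] (cS S (m + 1)) := by
    intro m
    have h1 : Measurable[F (m + 1)] fun ω => Real.sign (S (m + 1) ω) :=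
      measurable_real_sign.comp (hSm (m + 1))
    have h2 : Measurable[F (m + 1)] (maxS S m) :=
      (hMm m).mono (hFmono (Nat.le_succ m)) le_rfl
    have h3 : Measurable[F (m + 1)] fun ω => maxS S (m + 1) ω - maxS S m ω :=
      (hMm (m + 1)).sub h2
    exact h1.mul h3
  have hcb : ∀ m ω, |cS S (m + 1) ω| ≤ |X (m + 1) ω| := by
    intro m ω
    have h := cS_abs_le S ω (hS0 ω) m
    rwa [hdiff m ω] at h
  have hc2 : ∀ m, MemLp (cS S (m + 1)) 2 μ := by
    intro m
    refine MemLp.of_le (hX2 (m + 1)) ?_ (Filter.Eventually.of_forall fun ω => ?_)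
    · exact ((hcm m).stronglyMeasurable.mono (hFle (m + 1))).aestronglyMeasurable
    · simpa [Real.norm_eq_abs] using hcb m ω
  -- the key conditional-expectation estimate
  have key : ∀ k, ∀ φ : Ω → ℝ, StronglyMeasurable[F k] φ →
      (∀ ω, |φ ω| ≤ |X k ω|) → MemLp φ 2 μ →
      |∫ ω, φ ω * (S n ω - S k ω) ∂μ|
        ≤ ∫ ω, |X k ω * (μ[fun ω' => S n ω' - S k ω' | F k]) ω| ∂μ := by
    intro k φ hφm hφle hφ2
    have hg2 : MemLp (fun ω' => S n ω' - S k ω') 2 μ := (hS2 n).sub (hS2 k)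
    have hg1 : Integrable (fun ω' => S n ω' - S k ω') μ := hg2.integrable one_le_two
    have hφg : Integrable (φ * fun ω' => S n ω' - S k ω') μ := integrable_mul2 hφ2 hg2
    have hpull := condExp_mul_of_stronglyMeasurable_left (μ := μ) (m := F k) hφm hφg hg1
    have hXθ : Integrable
        (fun ω => X k ω * (μ[fun ω' => S n ω' - S k ω' | F k]) ω) μ := by
      have hXg : Integrable ((X k) * fun ω' => S n ω' - S k ω') μ :=
        integrable_mul2 (hX2 k) hg2
      have h2 := condExp_mul_of_stronglyMeasurable_left (μ := μ) (m := F k) (hadapt k) hXg hg1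
      exact (integrable_condExp.congr h2)
    have e1 : ∫ ω, φ ω * (S n ω - S k ω) ∂μ
        = ∫ ω, φ ω * (μ[fun ω' => S n ω' - S k ω' | F k]) ω ∂μ := by
      have h0 : (∫ ω, φ ω * (S n ω - S k ω) ∂μ)
          = ∫ ω, (φ * fun ω' => S n ω' - S k ω') ω ∂μ := rfl
      rw [h0, ← integral_condExp (hFle k)]
      exact integral_congr_ae hpull
    rw [e1]
    calc |∫ ω, φ ω * (μ[fun ω' => S n ω' - S k ω' | F k]) ω ∂μ|
        ≤ ∫ ω, |φ ω * (μ[fun ω' => S n ω' - S k ω' | F k]) ω| ∂μ := by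
          have h4 := norm_integral_le_integral_norm
            (μ := μ) (fun ω => φ ω * (μ[fun ω' => S n ω' - S k ω' | F k]) ω)
          simpa only [Real.norm_eq_abs] using h4
      _ ≤ ∫ ω, |X k ω * (μ[fun ω' => S n ω' - S k ω' | F k]) ω| ∂μ := by
          refine integral_mono_of_nonneg (Filter.Eventually.of_forall fun ω => abs_nonneg _)
            hXθ.abs (Filter.Eventually.of_forall fun ω => ?_)
          show |φ ω * (μ[fun ω' => S n ω' - S k ω' | F k]) ω|
            ≤ |X k ω * (μ[fun ω' => S n ω' - S k ω' | F k]) ω|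
          rw [abs_mul, abs_mul]
          exact mul_le_mul_of_nonneg_right (hφle ω) (abs_nonneg _)
  -- pointwise master inequality
  have hMaster : ∀ ω, maxS S n ω ^ 2 ≤ maxS S n ω ^ 2 / 2 + 2 * (S n ω) ^ 2
      - 2 * ∑ k ∈ Finset.Icc 1 n, cS S k ω * (S n ω - S k ω) := by
    intro ω
    have h1 := maxS_sq_le S ω n
    have h2 := abs_sum_cS_le S ω n
    have hsplit : ∑ k ∈ Finset.Icc 1 n, cS S k ω * S k ω
        = (∑ k ∈ Finset.Icc 1 n, cS S k ω) * S n ω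
          - ∑ k ∈ Finset.Icc 1 n, cS S k ω * (S n ω - S k ω) := by
      rw [Finset.sum_mul, ← Finset.sum_sub_distrib]
      exact Finset.sum_congr rfl fun k _ => by ring
    have h3 : (∑ k ∈ Finset.Icc 1 n, cS S k ω) * S n ω ≤ maxS S n ω * |S n ω| := by
      calc (∑ k ∈ Finset.Icc 1 n, cS S k ω) * S n ω
          ≤ |(∑ k ∈ Finset.Icc 1 n, cS S k ω) * S n ω| := le_abs_self _
        _ = |∑ k ∈ Finset.Icc 1 n, cS S k ω| * |S n ω| := abs_mul _ _
        _ ≤ maxS S n ω * |S n ω| := mul_le_mul_of_nonneg_right h2 (abs_nonneg _)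
    nlinarith [sq_nonneg (maxS S n ω - 2 * |S n ω|), sq_abs (S n ω)]
  -- integrability of summands
  have hint1 : ∀ k ∈ Finset.Icc 1 n,
      Integrable (fun ω => cS S k ω * (S n ω - S k ω)) μ := by
    intro k hk
    obtain ⟨m, rfl⟩ : ∃ m, k = m + 1 := ⟨k - 1, by have := (Finset.mem_Icc.mp hk).1; omega⟩
    exact integrable_mul2 (hc2 m) ((hS2 n).sub (hS2 (m + 1)))
  have hIsq : Integrable (fun ω => maxS S n ω ^ 2) μ := (hM2 n).integrable_sq
  have hSnsq : Integrable (fun ω => (S n ω) ^ 2) μ := (hS2 n).integrable_sq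
  have hsumInt : Integrable
      (fun ω => ∑ k ∈ Finset.Icc 1 n, cS S k ω * (S n ω - S k ω)) μ :=
    integrable_finset_sum _ hint1
  -- integrate the master inequality
  have hInt : ∫ ω, maxS S n ω ^ 2 ∂μ
      ≤ (∫ ω, maxS S n ω ^ 2 ∂μ) / 2 + 2 * ∫ ω, (S n ω) ^ 2 ∂μ
        - 2 * ∑ k ∈ Finset.Icc 1 n, ∫ ω, cS S k ω * (S n ω - S k ω) ∂μ := by
    have h1 : Integrable (fun ω => maxS S n ω ^ 2 / 2) μ := hIsq.div_const 2
    have h2 : Integrable (fun ω => 2 * (S n ω) ^ 2) μ := hSnsq.const_mul 2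
    have hadd : Integrable (fun ω => maxS S n ω ^ 2 / 2 + 2 * (S n ω) ^ 2) μ := h1.add h2
    have hC : Integrable
        (fun ω => 2 * ∑ k ∈ Finset.Icc 1 n, cS S k ω * (S n ω - S k ω)) μ :=
      hsumInt.const_mul 2
    have hRHSint : Integrable (fun ω => maxS S n ω ^ 2 / 2 + 2 * (S n ω) ^ 2
        - 2 * ∑ k ∈ Finset.Icc 1 n, cS S k ω * (S n ω - S k ω)) μ := hadd.sub hC
    have h := integral_mono hIsq hRHSint hMaster
    rw [integral_sub hadd hC, integral_add h1 h2, integral_div,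
      integral_const_mul, integral_const_mul, integral_finset_sum _ hint1] at h
    exact h
  -- lower bound for the correction terms
  have hT : -(∑ k ∈ Finset.Icc 1 n,
        ∫ ω, |X k ω * (μ[fun ω' => S n ω' - S k ω' | F k]) ω| ∂μ)
      ≤ ∑ k ∈ Finset.Icc 1 n, ∫ ω, cS S k ω * (S n ω - S k ω) ∂μ := by
    rw [← Finset.sum_neg_distrib]
    refine Finset.sum_le_sum fun k hk => ?_
    obtain ⟨m, rfl⟩ : ∃ m, k = m + 1 := ⟨k - 1, by have := (Finset.mem_Icc.mp hk).1; omega⟩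
    have h := key (m + 1) (cS S (m + 1)) (hcm m).stronglyMeasurable (hcb m) (hc2 m)
    have := (abs_le.mp h).1
    linarith
  -- expansion of E(S_n²)
  have hSn2 : ∫ ω, (S n ω) ^ 2 ∂μ
      ≤ (∑ k ∈ Finset.Icc 1 n, ∫ ω, (X k ω) ^ 2 ∂μ)
        + 2 * ∑ k ∈ Finset.Icc 1 n,
            ∫ ω, |X k ω * (μ[fun ω' => S n ω' - S k ω' | F k]) ω| ∂μ := by
    have hid : ∀ ω, (S n ω) ^ 2
        = ∑ k ∈ Finset.Icc 1 n, ((X k ω) ^ 2 + 2 * (X k ω * (S n ω - S k ω))) := by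
      intro ω
      have hper : ∀ k ∈ Finset.Icc 1 n, (X k ω) ^ 2 + 2 * (X k ω * (S n ω - S k ω))
          = X k ω * (2 * S n ω) - ((S k ω) ^ 2 - (S (k - 1) ω) ^ 2) := by
        intro k hk
        obtain ⟨m, rfl⟩ : ∃ m, k = m + 1 := ⟨k - 1, by have := (Finset.mem_Icc.mp hk).1; omega⟩
        have hX := hdiff m ω
        simp only [Nat.add_sub_cancel]
        rw [← hX]; ring
      rw [Finset.sum_congr rfl hper, Finset.sum_sub_distrib,
        telescope_Icc (fun k => (S k ω) ^ 2) n, ← Finset.sum_mul]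
      have hsum : ∑ k ∈ Finset.Icc 1 n, X k ω = S n ω := (hS n ω).symm
      rw [hsum, hS0]
      ring
    have hintk : ∀ k ∈ Finset.Icc 1 n,
        Integrable (fun ω => (X k ω) ^ 2 + 2 * (X k ω * (S n ω - S k ω))) μ := by
      intro k _
      exact (hX2 k).integrable_sq.add
        ((integrable_mul2 (hX2 k) ((hS2 n).sub (hS2 k))).const_mul 2)
    have e2 : ∫ ω, (S n ω) ^ 2 ∂μ = ∑ k ∈ Finset.Icc 1 n,
        ((∫ ω, (X k ω) ^ 2 ∂μ) + 2 * ∫ ω, X k ω * (S n ω - S k ω) ∂μ) := by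
      calc ∫ ω, (S n ω) ^ 2 ∂μ
          = ∫ ω, ∑ k ∈ Finset.Icc 1 n,
              ((X k ω) ^ 2 + 2 * (X k ω * (S n ω - S k ω))) ∂μ :=
            integral_congr_ae (Filter.Eventually.of_forall hid)
        _ = ∑ k ∈ Finset.Icc 1 n,
              ∫ ω, ((X k ω) ^ 2 + 2 * (X k ω * (S n ω - S k ω))) ∂μ :=
            integral_finset_sum _ hintk
        _ = _ := by
            refine Finset.sum_congr rfl fun k _ => ?_
            have ha : Integrable (fun ω => (X k ω) ^ 2) μ := (hX2 k).integrable_sq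
            have hb : Integrable (fun ω => 2 * (X k ω * (S n ω - S k ω))) μ :=
              (integrable_mul2 (hX2 k) ((hS2 n).sub (hS2 k))).const_mul 2
            rw [integral_add ha hb, integral_const_mul]
    rw [e2, Finset.sum_add_distrib, ← Finset.mul_sum]
    refine add_le_add le_rfl (mul_le_mul_of_nonneg_left (Finset.sum_le_sum fun k hk => ?_) (by norm_num))
    have h := key k (X k) (hadapt k) (fun ω => le_refl _) (hX2 k)
    exact le_trans (le_abs_self _) h
  -- the last term of the correction sum vanishes
  have hSg : ∑ k ∈ Finset.Icc 1 n,
        ∫ ω, |X k ω * (μ[fun ω' => S n ω' - S k ω' | F k]) ω| ∂μ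
      = ∑ k ∈ Finset.Icc 1 (n - 1),
        ∫ ω, |X k ω * (μ[fun ω' => S n ω' - S k ω' | F k]) ω| ∂μ := by
    have hins : Finset.Icc 1 n = insert n (Finset.Icc 1 (n - 1)) := by
      ext x; simp [Finset.mem_Icc]; omega
    rw [hins, Finset.sum_insert (by simp [Finset.mem_Icc]; omega)]
    have h0 : (fun ω' => S n ω' - S n ω') = (0 : Ω → ℝ) := funext fun ω' => sub_self _
    have hzero : (∫ ω, |X n ω * (μ[fun ω' => S n ω' - S n ω' | F n]) ω| ∂μ) = 0 := by
      rw [h0, condExp_zero]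
      simp
    rw [hzero, zero_add]
  -- rewrite the goal in terms of maxS
  have hMeq : (fun ω => (M ω) ^ 2) = fun ω => maxS S n ω ^ 2 := by
    funext ω
    rw [hM ω, maxS_eq_sup' S ω n hn ⟨1, by simp [hn]⟩]
  rw [show (∫ ω, (M ω) ^ 2 ∂μ) = ∫ ω, maxS S n ω ^ 2 ∂μ from by rw [hMeq], ← hSg]
  linarith
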